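/- Let [a], [b] ∈ Λ₂ be distinct. Then mult(a,b) = 6 if and only if either Supp(a) = Supp(b), or Supp(a) ∩ Supp(b) = ∅ and prod(a+b) = ±1 (a condition independent of the chosen representatives). -/

import Mathlib

open Complex

noncomputable section

namespace G31

/-- Vectors `a = (a₁,a₂,a₃,a₄) ∈ ℂ⁴`. -/
abbrev V : Type := Fin 4 → ℂ

/-- `μ₄ ⊂ ℂ`, the group of fourth roots of unity `{1, i, -1, -i}`. -/
def mu4 : Set ℂ := {z : ℂ | z ^ 4 = 1}

/-- `Ψ = μ₄ ∪ {0}`. -/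
def Psi : Set ℂ := insert 0 mu4

/-- `a ∈ Ψ⁴`. -/
def PsiV (a : V) : Prop := ∀ k, a k ∈ Psi

/-- The diagonal multiplicative action of `μ₄` on `ℂ⁴`: `a ~ b` iff `b = ξ • a` for some
`ξ ∈ μ₄`. -/
def rel (a b : V) : Prop := ∃ ξ : ℂ, ξ ^ 4 = 1 ∧ b = ξ • a

theorem rel_refl (a : V) : rel a a := ⟨1, by norm_num, by simp⟩

theorem rel_symm {a b : V} (h : rel a b) : rel b a := by
  obtain ⟨ξ, hξ, rfl⟩ := h
  refine ⟨ξ ^ 3, by rw [show (ξ ^ 3) ^ 4 = (ξ ^ 4) ^ 3 by ring, hξ, one_pow], ?_⟩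
  rw [smul_smul, show ξ ^ 3 * ξ = ξ ^ 4 by ring, hξ, one_smul]

theorem rel_trans {a b c : V} (h : rel a b) (h' : rel b c) : rel a c := by
  obtain ⟨ξ, hξ, rfl⟩ := h
  obtain ⟨η, hη, rfl⟩ := h'
  exact ⟨η * ξ, by rw [mul_pow, hξ, hη, one_mul], by rw [smul_smul]⟩

/-- The setoid on `ℂ⁴` given by the diagonal `μ₄`-action. -/
def phiSetoid : Setoid V := ⟨rel, rel_refl, rel_symm, rel_trans⟩

/-- `Φ`, the quotient of `Ψ⁴` (here of `ℂ⁴`) by the diagonal `μ₄`-action. -/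
def Phi : Type := Quotient phiSetoid

/-- The class `[a] ∈ Φ` of `a`. -/
def cls (a : V) : Phi := Quotient.mk phiSetoid a

/-- `Supp a = {k : aₖ ≠ 0}`. -/
def Supp (a : V) : Set (Fin 4) := {k | a k ≠ 0}

/-- `prod a = a₁a₂a₃a₄`. -/
def prod4 (a : V) : ℂ := ∏ k, a k

/-- The hyperplane `X_a = {x : ∑ aₖ xₖ = 0} ⊂ ℂ⁴`. -/
def Xa (a : V) : Set V := {x | ∑ k, a k * x k = 0}

/-- The support of a class `[a] ∈ Φ` (independent of the representative). -/
def SuppC (c : Phi) : Set (Fin 4) := {k | ∃ a : V, cls a = c ∧ a k ≠ 0}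

/-- `Λ₁ = {[a] : a ∈ Ψ⁴, |Supp a| = 1}`. -/
def Lambda1 : Set Phi := {c | ∃ a : V, cls a = c ∧ PsiV a ∧ (Supp a).ncard = 1}

/-- `Λ₂ = {[a] : a ∈ Ψ⁴, |Supp a| = 2}`. -/
def Lambda2 : Set Phi := {c | ∃ a : V, cls a = c ∧ PsiV a ∧ (Supp a).ncard = 2}

/-- `Λ₃ = {[a] : a ∈ Ψ⁴, |Supp a| = 4, prod a = ±1}`. -/
def Lambda3 : Set Phi :=
  {c | ∃ a : V, cls a = c ∧ PsiV a ∧ (Supp a).ncard = 4 ∧ (prod4 a = 1 ∨ prod4 a = -1)}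

/-- `Λ = Λ₁ ⊔ Λ₂ ⊔ Λ₃`, the hyperplanes of the reflection arrangement of type `G₃₁`. -/
def Lambda : Set Phi := Lambda1 ∪ Lambda2 ∪ Lambda3

/-- `Λ̂(a,b) = {[c] ∈ Λ : X_c ⊇ X_a ∩ X_b}` (all notions independent of representatives). -/
def LambdaHat (A B : Phi) : Set Phi :=
  {c | c ∈ Lambda ∧ ∃ xa xb xc : V, cls xa = A ∧ cls xb = B ∧ cls xc = c ∧
    Xa xa ∩ Xa xb ⊆ Xa xc}

/-- `mult(a,b) = |Λ̂(a,b)|`. -/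
def mult (A B : Phi) : ℕ := (LambdaHat A B).ncard

/-- `Λ(a,b) = Λ̂(a,b) \ {[a],[b]}`. -/
def LambdaAB (A B : Phi) : Set Phi := LambdaHat A B \ {A, B}

/-- `Λ_{j'}^m(a) = {[b] ∈ Λ_{j'} : [b] ≠ [a], mult(a,b) = m}`, where `S` stands for `Λ_{j'}`. -/
def LambdaPow (S : Set Phi) (m : ℕ) (A : Phi) : Set Phi :=
  {B | B ∈ S ∧ B ≠ A ∧ mult A B = m}

/-- `diff([a],[b]) = min_ξ |Supp (ξ a − b)|`, the minimum over representatives. -/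
def diffC (A B : Phi) : ℕ :=
  sInf {n | ∃ a b : V, cls a = A ∧ cls b = B ∧ (Supp (a - b)).ncard = n}

end G31

/-!
`X_a ∩ X_b ⊆ X_c` holds exactly when `c ∈ span {a, b}`, so `mult(a,b)` counts the classes of
nonzero vectors of `Ψ⁴` in that plane. If some index lies in `Supp a` but not in `Supp b` and
another one the other way round, such a vector is a `μ₄`-multiple of `a`, of `b`, or of `a + t b`
with `t ∈ μ₄`: at most six classes, the pencil of `a` and `b`.

* Equal supports `{i, j}`: the plane is that of `e_i, e_j`, whose whole pencil lies in `Λ`.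
* Disjoint supports: `a + t b` has full support and `prod (a + t b) = t² prod (a + b)` with
  `t² = ±1`, so the four classes `[a + t b]` lie in `Λ₃` exactly when `prod (a + b) = ±1`.
* Supports meeting in one index `q`: `Supp (a + t b)` has at most three elements, so
  `[a + t b] ∈ Λ` forces `a_q + t b_q = 0`, which leaves at most one `t`.
-/

namespace G31

open Set

lemma cls_eq_cls_iff {a b : V} : cls a = cls b ↔ rel a b := Quotient.eq

lemma cls_surjective : Function.Surjective cls := Quotient.mk_surjective

lemma ne_zero_of_pow_four_eq_one {z : ℂ} (h : z ^ 4 = 1) : z ≠ 0 := by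
  rintro rfl; norm_num at h

lemma cls_smul {ξ : ℂ} (hξ : ξ ^ 4 = 1) (a : V) : cls (ξ • a) = cls a :=
  (cls_eq_cls_iff.mpr ⟨ξ, hξ, rfl⟩).symm

lemma mem_Psi_iff {z : ℂ} : z ∈ Psi ↔ z = 0 ∨ z ^ 4 = 1 := Iff.rfl

lemma PsiV.pow_four_eq_one {a : V} (ha : PsiV a) {k : Fin 4} (hk : a k ≠ 0) :
    a k ^ 4 = 1 :=
  (ha k).resolve_left hk

lemma mem_Supp_iff {a : V} {k : Fin 4} : k ∈ Supp a ↔ a k ≠ 0 := Iff.rfl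

lemma Supp_eq_of_rel {a b : V} (h : rel a b) : Supp a = Supp b := by
  obtain ⟨ξ, hξ, rfl⟩ := h
  ext k
  simp [mem_Supp_iff, ne_zero_of_pow_four_eq_one hξ]

lemma Xa_eq_of_rel {a b : V} (h : rel a b) : Xa a = Xa b := by
  obtain ⟨ξ, hξ, rfl⟩ := h
  ext x
  simp [Xa, mul_assoc, ← Finset.mul_sum, ne_zero_of_pow_four_eq_one hξ]

lemma prod4_eq_of_rel {a b : V} (h : rel a b) : prod4 a = prod4 b := by
  obtain ⟨ξ, hξ, rfl⟩ := h
  simp [prod4, Finset.prod_mul_distrib, hξ]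

lemma PsiV.of_rel {a b : V} (h : rel a b) (ha : PsiV a) : PsiV b := by
  obtain ⟨ξ, hξ, rfl⟩ := h
  intro k
  rcases ha k with hk | hk
  · simp [hk, mem_Psi_iff]
  · simp [mem_Psi_iff, mul_pow, hξ, hk.out]

lemma cls_mem_Lambda_iff {c : V} :
    cls c ∈ Lambda ↔ PsiV c ∧ ((Supp c).ncard = 1 ∨ (Supp c).ncard = 2 ∨
      ((Supp c).ncard = 4 ∧ (prod4 c = 1 ∨ prod4 c = -1))) := by
  have transfer : ∀ {P : V → Prop}, (∀ {a b}, rel a b → P a → P b) →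
      ((∃ a, cls a = cls c ∧ P a) ↔ P c) := fun hP =>
    ⟨fun ⟨a, ha, hPa⟩ => hP (cls_eq_cls_iff.mp ha) hPa, fun hc => ⟨c, rfl, hc⟩⟩
  simp only [Lambda, Lambda1, Lambda2, Lambda3, mem_union, mem_ofPred_eq]
  rw [transfer, transfer, transfer]
  · tauto
  all_goals
    intro a b h
    simp only [Supp_eq_of_rel h, prod4_eq_of_rel h]
    exact And.imp_left (PsiV.of_rel h)

lemma cls_mem_LambdaHat_iff {a b c : V} :
    cls c ∈ LambdaHat (cls a) (cls b) ↔ cls c ∈ Lambda ∧ Xa a ∩ Xa b ⊆ Xa c := by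
  refine ⟨fun ⟨hc, xa, xb, xc, ha, hb, hc', hsub⟩ => ⟨hc, ?_⟩,
    fun ⟨hc, hsub⟩ => ⟨hc, a, b, c, rfl, rfl, rfl, hsub⟩⟩
  rwa [Xa_eq_of_rel (cls_eq_cls_iff.mp ha), Xa_eq_of_rel (cls_eq_cls_iff.mp hb),
    Xa_eq_of_rel (cls_eq_cls_iff.mp hc')] at hsub

lemma LambdaHat_congr {a b a' b' : V} (h : Xa a ∩ Xa b = Xa a' ∩ Xa b') :
    LambdaHat (cls a) (cls b) = LambdaHat (cls a') (cls b') := by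
  ext C
  obtain ⟨c, rfl⟩ := cls_surjective C
  rw [cls_mem_LambdaHat_iff, cls_mem_LambdaHat_iff, h]

lemma Xa_inter_subset_Xa_iff {a b c : V} :
    Xa a ∩ Xa b ⊆ Xa c ↔ ∃ α β : ℂ, c = α • a + β • b := by
  constructor
  · intro h
    let e := dotProductEquiv ℂ (Fin 4)
    have hker : ⨅ i, LinearMap.ker (![e a, e b] i) ≤ LinearMap.ker (e c) := by
      intro x hx
      simp only [Submodule.mem_iInf, Fin.forall_fin_two, LinearMap.mem_ker] at hx
      exact h ⟨hx.1, hx.2⟩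
    obtain ⟨f, hf⟩ :=
      (Submodule.mem_span_range_iff_exists_fun ℂ).1 (mem_span_of_iInf_ker_le_ker hker)
    refine ⟨f 0, f 1, e.injective ?_⟩
    simpa [Fin.sum_univ_two] using hf.symm
  · rintro ⟨α, β, rfl⟩ x ⟨ha, hb⟩
    simp only [Xa, mem_ofPred_eq, Pi.add_apply, Pi.smul_apply, smul_eq_mul, add_mul,
      Finset.sum_add_distrib, mul_assoc, ← Finset.mul_sum] at ha hb ⊢
    rw [ha, hb]; ring

lemma cls_ne_cls_of_Supp_ne {a b : V} (h : Supp a ≠ Supp b) : cls a ≠ cls b :=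
  fun h' => h (Supp_eq_of_rel (cls_eq_cls_iff.mp h'))

lemma ncard_mu4 : mu4.ncard = 4 := by
  have : mu4 = ↑(Polynomial.nthRootsFinset 4 (1 : ℂ)) := by
    ext z; simp [mu4]
  rw [this, ncard_coe_finset, Complex.isPrimitiveRoot_I.card_nthRootsFinset]

def pencil (u v : V) : Set Phi :=
  insert (cls u) (insert (cls v) ((fun t => cls (u + t • v)) '' mu4))

section Pencil

variable {u v : V} {k l : Fin 4}

lemma ncard_pencil (hku : u k ≠ 0) (hkv : v k = 0) (hlv : v l ≠ 0) (hlu : u l = 0) :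
    (pencil u v).ncard = 6 := by
  have hk : ∀ t : ℂ, k ∈ Supp (u + t • v) := fun t => by simp [mem_Supp_iff, hkv, hku]
  have hl : ∀ t : ℂ, t ≠ 0 → l ∈ Supp (u + t • v) := fun t ht => by
    simp [mem_Supp_iff, hlu, ht, hlv]
  have hinj : InjOn (fun t => cls (u + t • v)) mu4 := by
    intro t _ t' _ h
    obtain ⟨ξ, -, h⟩ := cls_eq_cls_iff.mp h
    have hξ : ξ = 1 := by
      have := congrFun h k
      simp only [Pi.add_apply, Pi.smul_apply, smul_eq_mul, hkv, mul_zero, add_zero] at this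
      exact (mul_eq_right₀ hku).mp this.symm
    simpa [hξ, hlu, hlv] using (congrFun h l).symm
  have hv : cls v ∉ (fun t => cls (u + t • v)) '' mu4 := by
    rintro ⟨t, -, h⟩
    exact cls_ne_cls_of_Supp_ne (fun hS => (hS ▸ hk t) hkv) h
  have hu : cls u ∉ insert (cls v) ((fun t => cls (u + t • v)) '' mu4) := by
    rintro (h | ⟨t, ht, h⟩)
    · exact cls_ne_cls_of_Supp_ne (fun hS => (hS ▸ (show k ∈ Supp u from hku)) hkv) h
    · exact cls_ne_cls_of_Supp_ne
        (fun hS => (hS ▸ hl t (ne_zero_of_pow_four_eq_one ht)) hlu) h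
  have hfin : mu4.Finite := finite_of_ncard_ne_zero (by rw [ncard_mu4]; norm_num)
  rw [pencil, ncard_insert_of_notMem hu ((hfin.image _).insert _),
    ncard_insert_of_notMem hv (hfin.image _), hinj.ncard_image, ncard_mu4]

lemma cls_mem_pencil (hu : PsiV u) (hv : PsiV v) (hku : u k ≠ 0) (hkv : v k = 0)
    (hlv : v l ≠ 0) (hlu : u l = 0) {c : V} (hc : PsiV c) (hc0 : c ≠ 0) {α β : ℂ}
    (h : c = α • u + β • v) : cls c ∈ pencil u v := by
  have hck : c k = α * u k := by simp [h, hkv]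
  have hcl : c l = β * v l := by simp [h, hlu]
  have hα4 : α ≠ 0 → α ^ 4 = 1 := fun hα => by
    have := hc.pow_four_eq_one (k := k) (by rw [hck]; exact mul_ne_zero hα hku)
    rwa [hck, mul_pow, hu.pow_four_eq_one hku, mul_one] at this
  have hβ4 : β ≠ 0 → β ^ 4 = 1 := fun hβ => by
    have := hc.pow_four_eq_one (k := l) (by rw [hcl]; exact mul_ne_zero hβ hlv)
    rwa [hcl, mul_pow, hv.pow_four_eq_one hlv, mul_one] at this
  rcases eq_or_ne α 0 with rfl | hα
  · have hβ : β ≠ 0 := by rintro rfl; simp [h] at hc0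
    rw [show c = β • v by simpa using h, cls_smul (hβ4 hβ)]
    exact mem_insert_of_mem _ (mem_insert _ _)
  rcases eq_or_ne β 0 with rfl | hβ
  · rw [show c = α • u by simpa using h, cls_smul (hα4 hα)]
    exact mem_insert _ _
  have hc' : c = α • (u + (β / α) • v) := by
    rw [h, smul_add, smul_smul, mul_div_cancel₀ _ hα]
  rw [hc', cls_smul (hα4 hα)]
  exact mem_insert_of_mem _ (mem_insert_of_mem _
    ⟨β / α, by rw [mu4, mem_ofPred_eq, div_pow, hα4 hα, hβ4 hβ, div_one], rfl⟩)

lemma LambdaHat_subset_pencil (hu : PsiV u) (hv : PsiV v) (hku : u k ≠ 0) (hkv : v k = 0)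
    (hlv : v l ≠ 0) (hlu : u l = 0) : LambdaHat (cls u) (cls v) ⊆ pencil u v := by
  intro C hC
  obtain ⟨c, rfl⟩ := cls_surjective C
  obtain ⟨hcΛ, hsub⟩ := cls_mem_LambdaHat_iff.mp hC
  obtain ⟨hc, hcard⟩ := cls_mem_Lambda_iff.mp hcΛ
  obtain ⟨α, β, rfl⟩ := Xa_inter_subset_Xa_iff.mp hsub
  refine cls_mem_pencil hu hv hku hkv hlv hlu hc ?_ rfl
  intro h0
  rw [h0] at hcard
  simp [Supp] at hcard

lemma pencil_subset_LambdaHat (hu : cls u ∈ Lambda) (hv : cls v ∈ Lambda)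
    (huv : ∀ t ∈ mu4, cls (u + t • v) ∈ Lambda) :
    pencil u v ⊆ LambdaHat (cls u) (cls v) := by
  rintro C (rfl | rfl | ⟨t, ht, rfl⟩) <;> refine cls_mem_LambdaHat_iff.mpr ⟨?_, ?_⟩
  · exact hu
  · exact Xa_inter_subset_Xa_iff.mpr ⟨1, 0, by simp⟩
  · exact hv
  · exact Xa_inter_subset_Xa_iff.mpr ⟨0, 1, by simp⟩
  · exact huv t ht
  · exact Xa_inter_subset_Xa_iff.mpr ⟨1, t, by simp⟩

end Pencil

lemma cls_single_mem_Lambda (i : Fin 4) : cls (Pi.single i 1) ∈ Lambda := by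
  refine cls_mem_Lambda_iff.mpr ⟨fun m => ?_, Or.inl ?_⟩
  · by_cases hm : m = i <;> simp [hm, mem_Psi_iff]
  · rw [show Supp (Pi.single i 1 : V) = {i} by ext m; simp [mem_Supp_iff, Pi.single_apply],
      ncard_singleton]

section SameSupport

variable {i j : Fin 4}

lemma eq_zero_of_Supp_eq_pair {a : V} (hSa : Supp a = {i, j}) {m : Fin 4} (hi : m ≠ i)
    (hj : m ≠ j) : a m = 0 := by
  by_contra h
  have : m ∈ Supp a := h
  simp [hSa, hi, hj] at this

lemma sum_mul_eq_of_Supp_eq_pair {a : V} (hij : i ≠ j) (hSa : Supp a = {i, j}) (x : V) :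
    ∑ k, a k * x k = a i * x i + a j * x j := by
  rw [← Finset.sum_pair hij (f := fun k => a k * x k)]
  refine (Finset.sum_subset (Finset.subset_univ _) fun m _ hm => ?_).symm
  simp only [Finset.mem_insert, Finset.mem_singleton, not_or] at hm
  rw [eq_zero_of_Supp_eq_pair hSa hm.1 hm.2, zero_mul]

lemma mem_Xa_single {x : V} : x ∈ Xa (Pi.single i 1) ↔ x i = 0 := by
  simp [Xa, Pi.single_apply]

lemma Xa_inter_Xa_eq_of_Supp_eq {a b : V} (hij : i ≠ j) (ha : PsiV a) (hb : PsiV b)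
    (hSa : Supp a = {i, j}) (hSb : Supp b = {i, j}) (hab : cls a ≠ cls b) :
    Xa a ∩ Xa b = Xa (Pi.single i 1) ∩ Xa (Pi.single j 1) := by
  have hai : a i ≠ 0 := show i ∈ Supp a by simp [hSa]
  have hbi : b i ≠ 0 := show i ∈ Supp b by simp [hSb]
  have hdet : a i * b j - a j * b i ≠ 0 := by
    intro hdet
    refine hab (Eq.symm ?_)
    have hb_eq : b = (b i / a i) • a := by
      funext m
      by_cases hmi : m = i
      · rw [hmi, Pi.smul_apply, smul_eq_mul]; field_simp
      by_cases hmj : m = j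
      · rw [hmj, Pi.smul_apply, smul_eq_mul]; field_simp; linear_combination hdet
      · simp [eq_zero_of_Supp_eq_pair hSa hmi hmj, eq_zero_of_Supp_eq_pair hSb hmi hmj]
    have hξ : (b i / a i) ^ 4 = 1 := by
      rw [div_pow, ha.pow_four_eq_one hai, hb.pow_four_eq_one hbi, div_one]
    rw [hb_eq, cls_smul hξ]
  ext x
  simp only [mem_inter_iff, mem_Xa_single]
  simp only [Xa, mem_ofPred_eq, sum_mul_eq_of_Supp_eq_pair hij hSa,
    sum_mul_eq_of_Supp_eq_pair hij hSb]
  constructor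
  · rintro ⟨h₁, h₂⟩
    exact ⟨(mul_eq_zero.mp (by linear_combination b j * h₁ - a j * h₂ :
        (a i * b j - a j * b i) * x i = 0)).resolve_left hdet,
      (mul_eq_zero.mp (by linear_combination a i * h₂ - b i * h₁ :
        (a i * b j - a j * b i) * x j = 0)).resolve_left hdet⟩
  · rintro ⟨h₁, h₂⟩
    simp [h₁, h₂]

lemma cls_single_add_smul_single_mem_Lambda (hij : i ≠ j) {t : ℂ} (ht : t ^ 4 = 1) :
    cls (Pi.single i 1 + t • Pi.single j 1) ∈ Lambda := by
  refine cls_mem_Lambda_iff.mpr ⟨fun m => ?_, Or.inr (Or.inl ?_)⟩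
  · by_cases hmi : m = i
    · simp [hmi, hij, mem_Psi_iff]
    · by_cases hmj : m = j <;> simp [hmi, hmj, hij.symm, mem_Psi_iff, ht]
  · rw [← ncard_pair hij]
    congr 1
    ext m
    by_cases hmi : m = i
    · simp [mem_Supp_iff, hmi, hij]
    · by_cases hmj : m = j <;>
        simp [mem_Supp_iff, hmi, hmj, hij.symm, ne_zero_of_pow_four_eq_one ht]

lemma LambdaHat_single_single (hij : i ≠ j) :
    LambdaHat (cls (Pi.single i 1)) (cls (Pi.single j 1)) =
      pencil (Pi.single i 1) (Pi.single j 1) := by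
  have hPsi : ∀ m : Fin 4, PsiV (Pi.single m 1) := fun m =>
    (cls_mem_Lambda_iff.mp (cls_single_mem_Lambda m)).1
  refine (LambdaHat_subset_pencil (hPsi i) (hPsi j) (k := i) (l := j) ?_ ?_ ?_ ?_).antisymm
    (pencil_subset_LambdaHat (cls_single_mem_Lambda i) (cls_single_mem_Lambda j)
      fun t ht => cls_single_add_smul_single_mem_Lambda hij ht)
  all_goals simp [hij, hij.symm]

lemma mult_eq_six_of_Supp_eq {a b : V} (hij : i ≠ j) (ha : PsiV a) (hb : PsiV b)
    (hSa : Supp a = {i, j}) (hSb : Supp b = {i, j}) (hab : cls a ≠ cls b) :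
    mult (cls a) (cls b) = 6 := by
  rw [mult, LambdaHat_congr (Xa_inter_Xa_eq_of_Supp_eq hij ha hb hSa hSb hab),
    LambdaHat_single_single hij]
  exact ncard_pencil (k := i) (l := j) (by simp) (by simp [hij]) (by simp) (by simp [hij.symm])

end SameSupport

section DisjointSupports

variable {a b : V}

lemma eq_zero_of_ne_zero_of_disjoint (hdisj : Disjoint (Supp a) (Supp b)) {m : Fin 4}
    (hbm : b m ≠ 0) : a m = 0 :=
  not_not.mp fun ham => disjoint_left.mp hdisj ham hbm

lemma Supp_add_smul_of_disjoint (hdisj : Disjoint (Supp a) (Supp b)) {t : ℂ} (ht : t ≠ 0) :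
    Supp (a + t • b) = Supp a ∪ Supp b := by
  ext m
  by_cases hbm : b m = 0
  · simp [mem_Supp_iff, hbm]
  · simp [mem_Supp_iff, hbm, ht, eq_zero_of_ne_zero_of_disjoint hdisj hbm]

lemma PsiV.add_smul_of_disjoint (ha : PsiV a) (hb : PsiV b)
    (hdisj : Disjoint (Supp a) (Supp b)) {t : ℂ} (ht : t ^ 4 = 1) : PsiV (a + t • b) := by
  intro m
  by_cases hbm : b m = 0
  · simpa [hbm] using ha m
  · simp [eq_zero_of_ne_zero_of_disjoint hdisj hbm, mem_Psi_iff, mul_pow, ht,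
      hb.pow_four_eq_one hbm]

lemma prod4_add_smul_of_disjoint (hdisj : Disjoint (Supp a) (Supp b)) (t : ℂ) :
    prod4 (a + t • b) = t ^ (Supp b).ncard * prod4 (a + b) := by
  classical
  have hfactor : ∀ m, (a + t • b) m = (if b m ≠ 0 then t else 1) * (a + b) m := by
    intro m
    by_cases hbm : b m = 0
    · simp [hbm]
    · simp [hbm, eq_zero_of_ne_zero_of_disjoint hdisj hbm]
  simp only [prod4, hfactor, Finset.prod_mul_distrib, Finset.prod_ite, Finset.prod_const,
    one_pow, mul_one]
  rw [ncard_eq_toFinset_card', Supp, toFinset_ofPred]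

lemma cls_add_smul_mem_Lambda_iff_of_disjoint (ha : PsiV a) (hb : PsiV b)
    (hSa : (Supp a).ncard = 2) (hSb : (Supp b).ncard = 2) (hdisj : Disjoint (Supp a) (Supp b))
    {t : ℂ} (ht : t ^ 4 = 1) :
    cls (a + t • b) ∈ Lambda ↔ prod4 (a + b) = 1 ∨ prod4 (a + b) = -1 := by
  have hcard : (Supp (a + t • b)).ncard = 4 := by
    rw [Supp_add_smul_of_disjoint hdisj (ne_zero_of_pow_four_eq_one ht), ncard_union_eq hdisj,
      hSa, hSb]
  have ht2 : t ^ 2 = 1 ∨ t ^ 2 = -1 := sq_eq_one_iff.mp (by rw [← pow_mul]; exact ht)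
  rw [cls_mem_Lambda_iff, hcard, prod4_add_smul_of_disjoint hdisj, hSb]
  simp only [PsiV.add_smul_of_disjoint ha hb hdisj ht, true_and]
  rcases ht2 with h | h <;> simp [h, neg_eq_iff_eq_neg, or_comm]

lemma mult_eq_six_iff_of_disjoint (ha : PsiV a) (hb : PsiV b) (hSa : (Supp a).ncard = 2)
    (hSb : (Supp b).ncard = 2) (hdisj : Disjoint (Supp a) (Supp b)) :
    mult (cls a) (cls b) = 6 ↔ prod4 (a + b) = 1 ∨ prod4 (a + b) = -1 := by
  obtain ⟨k, hk⟩ := nonempty_of_ncard_ne_zero (by rw [hSa]; norm_num : (Supp a).ncard ≠ 0)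
  obtain ⟨l, hl⟩ := nonempty_of_ncard_ne_zero (by rw [hSb]; norm_num : (Supp b).ncard ≠ 0)
  have hkb : b k = 0 := not_not.mp (disjoint_left.mp hdisj hk)
  have hla : a l = 0 := not_not.mp (disjoint_right.mp hdisj hl)
  have hsub := LambdaHat_subset_pencil ha hb hk hkb hl hla
  have hΛ := fun {t : ℂ} (ht : t ∈ mu4) =>
    cls_add_smul_mem_Lambda_iff_of_disjoint ha hb hSa hSb hdisj ht
  by_cases hP : prod4 (a + b) = 1 ∨ prod4 (a + b) = -1
  · refine iff_of_true ?_ hP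
    have hpencil := pencil_subset_LambdaHat (cls_mem_Lambda_iff.mpr ⟨ha, by simp [hSa]⟩)
      (cls_mem_Lambda_iff.mpr ⟨hb, by simp [hSb]⟩) fun t ht => (hΛ ht).mpr hP
    rw [mult, hsub.antisymm hpencil]
    exact ncard_pencil hk hkb hl hla
  · refine iff_of_false ?_ hP
    have hpair : LambdaHat (cls a) (cls b) ⊆ {cls a, cls b} := by
      intro C hC
      rcases hsub hC with rfl | rfl | ⟨t, ht, rfl⟩
      · exact mem_insert _ _
      · exact mem_insert_of_mem _ rfl
      · exact absurd ((hΛ ht).mp hC.1) hP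
    have := (ncard_le_ncard hpair (toFinite _)).trans (ncard_insert_le _ _)
    rw [ncard_singleton] at this
    rw [mult]
    omega

end DisjointSupports

lemma Supp_add_smul_subset (a b : V) (t : ℂ) : Supp (a + t • b) ⊆ Supp a ∪ Supp b := by
  intro m hm
  by_contra h
  simp only [mem_union, mem_Supp_iff, not_or, not_not] at h
  simp [mem_Supp_iff, h.1, h.2] at hm

section CommonIndex

variable {a b : V} {k l q : Fin 4}

lemma add_mul_eq_zero_of_cls_add_smul_mem_Lambda (hSa : (Supp a).ncard = 2)
    (hSb : (Supp b).ncard = 2) (hka : k ∈ Supp a) (hkb : k ∉ Supp b) (hlb : l ∈ Supp b)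
    (hla : l ∉ Supp a) (hqa : q ∈ Supp a) (hqb : q ∈ Supp b) {t : ℂ} (ht : t ^ 4 = 1)
    (h : cls (a + t • b) ∈ Lambda) : a q + t * b q = 0 := by
  by_contra hq
  have hle : (Supp (a + t • b)).ncard ≤ 3 := by
    have hunion := ncard_union_add_ncard_inter (Supp a) (Supp b)
    have hinter : 0 < (Supp a ∩ Supp b).ncard := (ncard_pos).mpr ⟨q, hqa, hqb⟩
    exact (ncard_le_ncard (Supp_add_smul_subset a b t)).trans (by omega)
  have hge : 3 ≤ (Supp (a + t • b)).ncard := by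
    have hkl : ({k, l, q} : Set (Fin 4)).ncard = 3 := ncard_eq_three.mpr
      ⟨k, l, q, fun h => hla (h ▸ hka), fun h => hkb (h ▸ hqb), fun h => hla (h ▸ hqa),
        rfl⟩
    rw [← hkl]
    refine ncard_le_ncard (insert_subset ?_ (insert_subset ?_ (singleton_subset_iff.mpr ?_)))
    · simpa [mem_Supp_iff, not_not.mp hkb] using hka
    · simpa [mem_Supp_iff, not_not.mp hla, ne_zero_of_pow_four_eq_one ht] using hlb
    · simpa [mem_Supp_iff] using hq
  obtain ⟨-, hcard⟩ := cls_mem_Lambda_iff.mp h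
  rcases hcard with h | h | ⟨h, -⟩ <;> omega

lemma mult_le_three_of_Supp_ne (ha : PsiV a) (hb : PsiV b) (hSa : (Supp a).ncard = 2)
    (hSb : (Supp b).ncard = 2) (hne : Supp a ≠ Supp b) (hqa : q ∈ Supp a) (hqb : q ∈ Supp b) :
    mult (cls a) (cls b) ≤ 3 := by
  have hnsub : ∀ {s t : Set (Fin 4)}, s.ncard = 2 → t.ncard = 2 → s ≠ t →
      ∃ k ∈ s, k ∉ t := by
    intro s t hs ht hst
    by_contra! h
    exact hst (eq_of_subset_of_ncard_le h (by rw [hs, ht]))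
  obtain ⟨k, hka, hkb⟩ := hnsub hSa hSb hne
  obtain ⟨l, hlb, hla⟩ := hnsub hSb hSa (Ne.symm hne)
  have hsub : LambdaHat (cls a) (cls b) ⊆ {cls a, cls b, cls (a + (-(a q / b q)) • b)} := by
    intro C hC
    rcases LambdaHat_subset_pencil ha hb hka (not_not.mp hkb) hlb (not_not.mp hla) hC with
      rfl | rfl | ⟨t, ht, rfl⟩
    · exact mem_insert _ _
    · exact mem_insert_of_mem _ (mem_insert _ _)
    · have h := add_mul_eq_zero_of_cls_add_smul_mem_Lambda hSa hSb hka hkb hlb hla hqa hqb ht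
        hC.1
      rw [show t = -(a q / b q) by field_simp [show b q ≠ 0 from hqb]; linear_combination h]
      exact mem_insert_of_mem _ (mem_insert_of_mem _ rfl)
  have h3 := (ncard_le_ncard hsub (toFinite _)).trans (ncard_insert_le _ _)
  have h2 := ncard_insert_le (cls b) {cls (a + (-(a q / b q)) • b)}
  rw [ncard_singleton] at h2
  rw [mult]
  omega

end CommonIndex

/-- for distinct `[a], [b] ∈ Λ₂`, `mult(a,b) = 6` iff either `Supp a = Supp b`,
or `Supp a ∩ Supp b = ∅` and `prod (a+b) = ±1` (a condition independent of the chosen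
representatives). -/
theorem stmt18 : ∀ A ∈ Lambda2, ∀ B ∈ Lambda2, A ≠ B → ∀ a b : V, cls a = A → cls b = B →
    (mult A B = 6 ↔
      (Supp a = Supp b ∨
        (Supp a ∩ Supp b = ∅ ∧ (prod4 (a + b) = 1 ∨ prod4 (a + b) = -1)))) := by
  rintro _ ⟨a', ha', hPa', hSa⟩ _ ⟨b', hb', hPb', hSb⟩ hAB a b rfl rfl
  have hra := cls_eq_cls_iff.mp ha'
  have hrb := cls_eq_cls_iff.mp hb'
  have ha := hPa'.of_rel hra
  have hb := hPb'.of_rel hrb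
  rw [Supp_eq_of_rel hra] at hSa
  rw [Supp_eq_of_rel hrb] at hSb
  by_cases hS : Supp a = Supp b
  · obtain ⟨i, j, hij, hpair⟩ := ncard_eq_two.mp hSa
    exact iff_of_true (mult_eq_six_of_Supp_eq hij ha hb hpair (hS ▸ hpair) hAB) (Or.inl hS)
  simp only [hS, false_or]
  rcases (Supp a ∩ Supp b).eq_empty_or_nonempty with hdisj | ⟨q, hqa, hqb⟩
  · simpa [hdisj] using
      mult_eq_six_iff_of_disjoint ha hb hSa hSb (disjoint_iff_inter_eq_empty.mpr hdisj)
  · have := mult_le_three_of_Supp_ne ha hb hSa hSb hS hqa hqb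
    exact iff_of_false (by omega) fun h => (h.1.subset ⟨hqa, hqb⟩ : q ∈ (∅ : Set (Fin 4)))

end G31
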